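/- arXiv:2408.12848 — 2 statements merged into one kernel-verified Lean document; each statement's English description precedes it below -/
import Mathlib

section
/- Let T, S be bounded linear operators on a complex Hilbert space H and t ∈ (0,1). Then w²(T*S) ≤ (1/(2(1+t)))‖|T|² + |S|²‖ w(T*S) + (t/(4(1+t)))‖|T|⁴ + |S|⁴‖ + (t/(2(1+t))) w(|S|²|T|²). -/
/-!
For a unit vector `x` put `p = |⟪T* S x, x⟫| = |⟪S x, T x⟫| ≤ ‖S x‖ ‖T x‖`. By AM-GM,
`p ≤ (‖T x‖² + ‖S x‖²) / 2 ≤ ‖|T|² + |S|²‖ / 2`, so `p² ≤ ‖|T|² + |S|²‖ w(T*S) / 2`.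
Writing `‖T x‖² ‖S x‖² = |⟪|T|² x, x⟫ ⟪x, |S|² x⟫|`, Buzano's inequality gives
`p² ≤ (‖|T|² x‖ ‖|S|² x‖ + |⟪|S|² |T|² x, x⟫|) / 2 ≤ ‖|T|⁴ + |S|⁴‖ / 4 + w(|S|² |T|²) / 2`.
The convex combination of these two estimates with weights `1 / (1 + t)` and `t / (1 + t)`,
followed by the supremum over `x`, is the claim.
-/

open scoped InnerProductSpace
open Set Filter

variable {H : Type*} [NormedAddCommGroup H] [InnerProductSpace ℂ H] [CompleteSpace H]

/-- The numerical radius of a bounded linear operator. -/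
noncomputable def numRad (T : H →L[ℂ] H) : ℝ :=
  ⨆ x : {x : H // ‖x‖ = 1}, ‖(⟪T x, x⟫_ℂ)‖

/-- The absolute value `|T| = (T*T)^(1/2)` of a bounded linear operator. -/
noncomputable def opAbs (T : H →L[ℂ] H) : H →L[ℂ] H := CFC.sqrt (star T * T)

section General

variable {𝕜 E : Type*} [RCLike 𝕜] [NormedAddCommGroup E] [InnerProductSpace 𝕜 E]

variable (𝕜) in
/-- Buzano's inequality. The reflection of `v` in the line through `e` is
`2 ⟪e, v⟫ e - v` and has the norm of `v`. -/
theorem norm_inner_mul_inner_le_of_norm_eq_one (u v : E) {e : E} (he : ‖e‖ = 1) :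
    ‖⟪u, e⟫_𝕜 * ⟪e, v⟫_𝕜‖ ≤ (‖u‖ * ‖v‖ + ‖⟪u, v⟫_𝕜‖) / 2 := by
  set R := (𝕜 ∙ e).reflection
  have hR : ⟪u, R v⟫_𝕜 + ⟪u, v⟫_𝕜 = 2 * (⟪u, e⟫_𝕜 * ⟪e, v⟫_𝕜) := by
    simp only [R, Submodule.reflection_apply, Submodule.starProjection_unit_singleton 𝕜 he,
      inner_sub_right, two_smul, inner_add_right, inner_smul_right]
    ring
  have htwice := calc
    2 * ‖⟪u, e⟫_𝕜 * ⟪e, v⟫_𝕜‖ = ‖⟪u, R v⟫_𝕜 + ⟪u, v⟫_𝕜‖ := by simp [hR]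
    _ ≤ ‖u‖ * ‖R v‖ + ‖⟪u, v⟫_𝕜‖ := by grw [norm_add_le, norm_inner_le_norm]
    _ = ‖u‖ * ‖v‖ + ‖⟪u, v⟫_𝕜‖ := by rw [R.norm_map]
  linarith

theorem ContinuousLinearMap.norm_sq_add_norm_sq_le [CompleteSpace E] (A B : E →L[𝕜] E)
    (x : E) :
    ‖A x‖ ^ 2 + ‖B x‖ ^ 2 ≤ ‖star A * A + star B * B‖ * ‖x‖ ^ 2 := calc
  ‖A x‖ ^ 2 + ‖B x‖ ^ 2 = RCLike.re ⟪(star A * A + star B * B) x, x⟫_𝕜 := by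
    simp only [apply_norm_sq_eq_inner_adjoint_left, star_eq_adjoint, add_apply, inner_add_left,
      map_add]
    rfl
  _ ≤ ‖(star A * A + star B * B) x‖ * ‖x‖ := re_inner_le_norm _ _
  _ ≤ ‖star A * A + star B * B‖ * ‖x‖ ^ 2 := by
    rw [sq, ← mul_assoc]; gcongr; exact le_opNorm _ _

end General

omit [CompleteSpace H] in
lemma numRad_nonneg (T : H →L[ℂ] H) : 0 ≤ numRad T :=
  Real.iSup_nonneg fun _ => norm_nonneg _

omit [CompleteSpace H] in
lemma norm_inner_le_numRad (T : H →L[ℂ] H) {x : H} (hx : ‖x‖ = 1) :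
    ‖⟪T x, x⟫_ℂ‖ ≤ numRad T := by
  refine le_ciSup (f := fun y : {x : H // ‖x‖ = 1} => ‖⟪T y, y⟫_ℂ‖) ⟨‖T‖, ?_⟩ ⟨x, hx⟩
  rintro _ ⟨y, rfl⟩
  calc ‖⟪T y, y⟫_ℂ‖ ≤ ‖T y‖ * ‖(y : H)‖ := norm_inner_le_norm _ _
    _ ≤ ‖T‖ := by simpa [y.2] using T.le_opNorm y

omit [CompleteSpace H] in
lemma numRad_sq_le_of_forall (T : H →L[ℂ] H) {C : ℝ} (hC : 0 ≤ C)
    (h : ∀ x : H, ‖x‖ = 1 → ‖⟪T x, x⟫_ℂ‖ ^ 2 ≤ C) : numRad T ^ 2 ≤ C := by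
  rw [← Real.le_sqrt (numRad_nonneg T) hC]
  exact Real.iSup_le (fun x => Real.le_sqrt_of_sq_le (h x x.2)) (Real.sqrt_nonneg C)

lemma opAbs_sq (T : H →L[ℂ] H) : opAbs T ^ 2 = star T * T :=
  CFC.sq_sqrt (star T * T) (star_mul_self_nonneg T)

lemma isSelfAdjoint_opAbs_sq (T : H →L[ℂ] H) : IsSelfAdjoint (opAbs T ^ 2) :=
  opAbs_sq T ▸ IsSelfAdjoint.star_mul_self T

lemma opAbs_pow_four (T : H →L[ℂ] H) : opAbs T ^ 4 = star (opAbs T ^ 2) * opAbs T ^ 2 := by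
  rw [(isSelfAdjoint_opAbs_sq T).star_eq, ← sq, ← pow_mul]

lemma inner_opAbs_sq_apply_self (T : H →L[ℂ] H) (x : H) :
    ⟪(opAbs T ^ 2) x, x⟫_ℂ = (‖T x‖ : ℂ) ^ 2 := by
  rw [opAbs_sq, mul_apply_eq_comp, ContinuousLinearMap.star_eq_adjoint,
    ContinuousLinearMap.adjoint_inner_left, inner_self_eq_norm_sq_to_K]
  rfl

lemma inner_opAbs_sq_apply_opAbs_sq_apply (T S : H →L[ℂ] H) (x : H) :
    ⟪(opAbs T ^ 2) x, (opAbs S ^ 2) x⟫_ℂ = ⟪(opAbs S ^ 2 * opAbs T ^ 2) x, x⟫_ℂ :=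
  ((isSelfAdjoint_opAbs_sq S).isSymmetric _ _).symm

lemma norm_inner_star_mul_apply_self_le (T S : H →L[ℂ] H) (x : H) :
    ‖⟪(star T * S) x, x⟫_ℂ‖ ≤ ‖S x‖ * ‖T x‖ := by
  rw [mul_apply_eq_comp, ContinuousLinearMap.star_eq_adjoint,
    ContinuousLinearMap.adjoint_inner_left]
  exact norm_inner_le_norm _ _

lemma norm_inner_star_mul_apply_self_le_half_norm (T S : H →L[ℂ] H) {x : H} (hx : ‖x‖ = 1) :
    ‖⟪(star T * S) x, x⟫_ℂ‖ ≤ ‖opAbs T ^ 2 + opAbs S ^ 2‖ / 2 := by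
  have hsum := T.norm_sq_add_norm_sq_le S x
  rw [hx, one_pow, mul_one, ← opAbs_sq, ← opAbs_sq] at hsum
  nlinarith [norm_inner_star_mul_apply_self_le T S x, sq_nonneg (‖T x‖ - ‖S x‖)]

lemma sq_norm_inner_star_mul_apply_self_le (T S : H →L[ℂ] H) {x : H} (hx : ‖x‖ = 1) :
    ‖⟪(star T * S) x, x⟫_ℂ‖ ^ 2 ≤
      ‖opAbs T ^ 4 + opAbs S ^ 4‖ / 4 + numRad (opAbs S ^ 2 * opAbs T ^ 2) / 2 := by
  set P := opAbs T ^ 2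
  set Q := opAbs S ^ 2
  have hbuzano := norm_inner_mul_inner_le_of_norm_eq_one ℂ (P x) (Q x) hx
  rw [norm_mul, norm_inner_symm x, inner_opAbs_sq_apply_self, inner_opAbs_sq_apply_self]
    at hbuzano
  have hsum := P.norm_sq_add_norm_sq_le Q x
  rw [hx, one_pow, mul_one, ← opAbs_pow_four, ← opAbs_pow_four] at hsum
  have hcross := norm_inner_le_numRad (Q * P) hx
  rw [← inner_opAbs_sq_apply_opAbs_sq_apply] at hcross
  calc ‖⟪(star T * S) x, x⟫_ℂ‖ ^ 2 ≤ (‖S x‖ * ‖T x‖) ^ 2 := by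
        gcongr; exact norm_inner_star_mul_apply_self_le T S x
    _ ≤ _ := by
        simp only [norm_pow, Complex.norm_real, norm_norm] at hbuzano
        nlinarith [sq_nonneg (‖P x‖ - ‖Q x‖)]

theorem stmt8 (T S : H →L[ℂ] H) (t : ℝ) (ht : t ∈ Ioo (0:ℝ) 1) :
    numRad (star T * S) ^ 2 ≤
      (1 / (2 * (1 + t))) * ‖opAbs T ^ 2 + opAbs S ^ 2‖ * numRad (star T * S) +
      (t / (4 * (1 + t))) * ‖opAbs T ^ 4 + opAbs S ^ 4‖ +
      (t / (2 * (1 + t))) * numRad (opAbs S ^ 2 * opAbs T ^ 2) := by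
  have ht0 : 0 < t := ht.1
  have hw := numRad_nonneg (star T * S)
  have hw0 := numRad_nonneg (opAbs S ^ 2 * opAbs T ^ 2)
  refine numRad_sq_le_of_forall _ (by positivity) fun x hx => ?_
  set p := ‖⟪(star T * S) x, x⟫_ℂ‖
  have hp : 0 ≤ p := norm_nonneg _
  have h_half_norm : p ^ 2 ≤ ‖opAbs T ^ 2 + opAbs S ^ 2‖ / 2 * numRad (star T * S) := by
    rw [sq]
    exact mul_le_mul (norm_inner_star_mul_apply_self_le_half_norm T S hx)
      (norm_inner_le_numRad _ hx) hp (by positivity)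
  have h_buzano := sq_norm_inner_star_mul_apply_self_le T S hx
  have h_comb : (1 + t) * p ^ 2 ≤ ‖opAbs T ^ 2 + opAbs S ^ 2‖ / 2 * numRad (star T * S) +
      t * (‖opAbs T ^ 4 + opAbs S ^ 4‖ / 4 + numRad (opAbs S ^ 2 * opAbs T ^ 2) / 2) := by
    nlinarith
  field_simp
  linarith
end

section
/- Let T be a bounded linear operator on a complex Hilbert space H and x a unit vector. Then |⟨Tx, x⟩|² ≤ (1/2)(|⟨T²x, x⟩| + ‖Tx‖‖T*x‖). -/
open scoped InnerProductSpace
open Set Filter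

variable {H : Type*} [NormedAddCommGroup H] [InnerProductSpace ℂ H] [CompleteSpace H]

lemma buzano (u v e : H) (he : ‖e‖ = 1) :
    ‖⟪u, e⟫_ℂ * ⟪e, v⟫_ℂ‖ ≤ (‖u‖ * ‖v‖ + ‖⟪u, v⟫_ℂ‖) / 2 := by
  set w : H := (2 * ⟪e, v⟫_ℂ) • e - v with hw
  have hnw : ‖w‖ = ‖v‖ := by
    have h1 : ‖w‖ ^ 2 = ‖v‖ ^ 2 := by
      rw [hw, @norm_sub_sq ℂ, norm_smul, inner_smul_left]
      rw [he, mul_one]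
      have hc : (starRingEnd ℂ) (2 * ⟪e, v⟫_ℂ) * ⟪e, v⟫_ℂ
          = ((2 * ‖⟪e, v⟫_ℂ‖ ^ 2 : ℝ) : ℂ) := by
        rw [map_mul, mul_assoc, RCLike.conj_mul]
        push_cast
        norm_num
        left
        simp [Complex.conj_ofNat]
      rw [hc]
      simp [norm_mul, ← Complex.ofReal_pow]
      ring
    nlinarith [norm_nonneg w, norm_nonneg v]
  have key : (2 : ℂ) * (⟪u, e⟫_ℂ * ⟪e, v⟫_ℂ) = ⟪u, v⟫_ℂ + ⟪u, w⟫_ℂ := by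
    rw [hw, inner_sub_right, inner_smul_right]; ring
  have := norm_add_le (⟪u, v⟫_ℂ) (⟪u, w⟫_ℂ)
  have h2 : ‖⟪u, w⟫_ℂ‖ ≤ ‖u‖ * ‖w‖ := norm_inner_le_norm u w
  have h3 : ‖(2 : ℂ) * (⟪u, e⟫_ℂ * ⟪e, v⟫_ℂ)‖ = 2 * ‖⟪u, e⟫_ℂ * ⟪e, v⟫_ℂ‖ := by
    rw [norm_mul]; norm_num
  rw [key] at h3
  rw [hnw] at h2
  linarith

theorem stmt12 (T : H →L[ℂ] H) (x : H) (hx : ‖x‖ = 1) :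
    ‖⟪T x, x⟫_ℂ‖ ^ 2 ≤
      (1 / 2) * (‖⟪(T * T) x, x⟫_ℂ‖ + ‖T x‖ * ‖(star T) x‖) := by
  have hb := buzano (T x) ((star T) x) x hx
  have h1 : ⟪x, (star T) x⟫_ℂ = ⟪T x, x⟫_ℂ := by
    rw [ContinuousLinearMap.star_eq_adjoint, ← ContinuousLinearMap.adjoint_inner_left,
      ContinuousLinearMap.adjoint_adjoint]
  have h2 : ⟪T x, (star T) x⟫_ℂ = ⟪(T * T) x, x⟫_ℂ := by
    rw [ContinuousLinearMap.star_eq_adjoint, ContinuousLinearMap.adjoint_inner_right]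
    rfl
  rw [h1, h2] at hb
  calc ‖⟪T x, x⟫_ℂ‖ ^ 2 = ‖⟪T x, x⟫_ℂ * ⟪T x, x⟫_ℂ‖ := by rw [norm_mul]; ring
    _ ≤ (‖T x‖ * ‖(star T) x‖ + ‖⟪(T * T) x, x⟫_ℂ‖) / 2 := hb
    _ = (1 / 2) * (‖⟪(T * T) x, x⟫_ℂ‖ + ‖T x‖ * ‖(star T) x‖) := by ring
end
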